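/- arXiv:2509.16872 — 8 statements merged into one kernel-verified Lean document; each statement's English description precedes it below -/
import Mathlib

section
/- The determinant of any square Petrie matrix (a 0-1 matrix in which the ones in each row occur consecutively) is equal to -1, 0, or 1. -/
/-!
Right multiplication by the upper bidiagonal matrix with `1` on the diagonal and `-1` above it
(determinant `1`) replaces every column by its difference with the previous one, so the indicator
row of an interval `[a, b)` telescopes to `e_a - e_b`. For a square matrix whose rows all have this
shape, either some row has a single nonzero entry `±1`, and Laplace expansion along it reduces to a
smaller matrix of the same shape, or every row sums to zero and the determinant vanishes.
-/

open Matrix Finset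

variable {R : Type*} [CommRing R]

/-- The basis vector `e_a` when `a < n`, and `0` when `a ≥ n`. -/
def natIndicator (n a : ℕ) : Fin n → R := fun j => if (j : ℕ) = a then 1 else 0

lemma natIndicator_of_lt {n a : ℕ} (h : a < n) :
    (natIndicator n a : Fin n → R) = Pi.single ⟨a, h⟩ 1 := by
  ext j
  simp [natIndicator, Pi.single_apply, Fin.ext_iff]

lemma natIndicator_of_le {n a : ℕ} (h : n ≤ a) : (natIndicator n a : Fin n → R) = 0 := by
  ext j
  simp [natIndicator, show (j : ℕ) ≠ a by omega]

lemma sum_natIndicator (n a : ℕ) :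
    ∑ j, (natIndicator n a : Fin n → R) j = if a < n then 1 else 0 := by
  split_ifs with h
  · simp [natIndicator_of_lt h]
  · simp [natIndicator_of_le (not_lt.mp h)]

lemma exists_natIndicator_comp_succAbove {k : ℕ} (c : Fin (k + 1)) (a : ℕ) :
    ∃ a', (natIndicator (k + 1) a : Fin (k + 1) → R) ∘ c.succAbove = natIndicator k a' := by
  by_cases h : ∃ p : Fin k, (c.succAbove p : ℕ) = a
  · obtain ⟨p, rfl⟩ := h
    refine ⟨p, funext fun j => ?_⟩
    simp [natIndicator, ← Fin.ext_iff]
  · push Not at h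
    refine ⟨k, funext fun j => ?_⟩
    simp [natIndicator, h j, j.isLt.ne]

theorem Matrix.det_eq_zero_of_sum_row_eq_zero {n : Type*} [Fintype n] [DecidableEq n]
    [Nonempty n] {A : Matrix n n R} (h : ∀ i, ∑ j, A i j = 0) : A.det = 0 := by
  obtain ⟨j⟩ := ‹Nonempty n›
  have := det_updateCol_sum A j 1
  simp only [Pi.one_apply, one_smul, h] at this
  rw [← this]
  exact det_eq_zero_of_column_eq_zero j fun i => by simp

theorem Matrix.det_eq_of_row_eq_single {n : ℕ} (A : Matrix (Fin (n + 1)) (Fin (n + 1)) R)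
    {i c : Fin (n + 1)} {x : R} (h : A i = Pi.single c x) :
    A.det = (-1) ^ (i + c : ℕ) * x * (A.submatrix i.succAbove c.succAbove).det := by
  rw [det_succ_row A i, Finset.sum_eq_single c (fun j _ hj => by simp [h, hj]) (by simp), h,
    Pi.single_eq_same]

def colDiff (n : ℕ) : Matrix (Fin n) (Fin n) R :=
  of fun j => natIndicator n j - natIndicator n (j + 1)

lemma colDiff_row (n : ℕ) (j : Fin n) :
    (colDiff n : Matrix (Fin n) (Fin n) R) j = natIndicator n j - natIndicator n (j + 1) := rfl

theorem det_colDiff (n : ℕ) : (colDiff n : Matrix (Fin n) (Fin n) R).det = 1 := by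
  have hupper : (colDiff n : Matrix (Fin n) (Fin n) R).BlockTriangular id := fun j k hkj => by
    have : (k : ℕ) < j := hkj
    simp [colDiff_row, natIndicator, this.ne, show (k : ℕ) ≠ j + 1 by omega]
  simp [det_of_isUpperTriangular hupper, colDiff_row, natIndicator]

theorem vecMul_colDiff {n a b : ℕ} (hab : a ≤ b) (hbn : b ≤ n) :
    (fun j : Fin n => if a ≤ (j : ℕ) ∧ (j : ℕ) < b then (1 : R) else 0) ᵥ* colDiff n =
      natIndicator n a - natIndicator n b := by
  have hfilter : (range n).filter (fun j => a ≤ j ∧ j < b) = Ico a b := by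
    ext j
    simp only [mem_filter, mem_range, mem_Ico]
    omega
  let e : ℕ → Fin n → R := natIndicator n
  calc _ = ∑ j ∈ Ico a b, (e j - e (j + 1)) := by
        rw [vecMul_eq_sum]
        simp only [ite_smul, one_smul, zero_smul, colDiff_row]
        rw [Fin.sum_univ_eq_sum_range (fun j => if a ≤ j ∧ j < b then e j - e (j + 1) else 0),
          ← sum_filter, hfilter]
    _ = e a - e b := by
        rw [← neg_sub, ← sum_Ico_sub (f := e) hab, ← sum_neg_distrib]
        simp only [neg_sub]

theorem det_mem_range_signType_cast_of_row_eq_single {n : ℕ}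
    (A : Matrix (Fin (n + 1)) (Fin (n + 1)) R) {i c : Fin (n + 1)} {s : SignType}
    (h : A i = Pi.single c (s : R))
    (hminor : (A.submatrix i.succAbove c.succAbove).det ∈ Set.range SignType.cast) :
    A.det ∈ Set.range SignType.cast := by
  obtain ⟨t, ht⟩ := hminor
  exact ⟨(-1) ^ (i + c : ℕ) * s * t, by simp [det_eq_of_row_eq_single A h, ht]⟩

theorem det_mem_range_signType_cast_of_rows_natIndicator_sub {n : ℕ}
    (A : Matrix (Fin n) (Fin n) R)
    (hA : ∀ i, ∃ a b, A i = natIndicator n a - natIndicator n b) :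
    A.det ∈ Set.range SignType.cast := by
  induction n with
  | zero => exact ⟨1, by simp⟩
  | succ k ih =>
    choose a b hab using hA
    by_cases hbalanced : ∀ i, (a i < k + 1 ↔ b i < k + 1)
    · have hsum (i : Fin (k + 1)) : ∑ j, A i j = 0 := by
        simp [hab, sum_natIndicator, hbalanced i]
      exact ⟨0, by simp [det_eq_zero_of_sum_row_eq_zero hsum]⟩
    push Not at hbalanced
    obtain ⟨i, hi⟩ := hbalanced
    obtain ⟨c, s, hrow⟩ : ∃ c s, A i = Pi.single c ((s : SignType) : R) := by
      rcases hi with ⟨ha, hb⟩ | ⟨ha, hb⟩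
      · exact ⟨⟨a i, ha⟩, 1, by simp [hab, natIndicator_of_lt ha, natIndicator_of_le hb]⟩
      · exact ⟨⟨b i, hb⟩, -1, by simp [hab, natIndicator_of_lt hb, natIndicator_of_le ha,
          Pi.single_neg]⟩
    refine det_mem_range_signType_cast_of_row_eq_single A hrow (ih _ fun r => ?_)
    obtain ⟨a', ha'⟩ := exists_natIndicator_comp_succAbove (R := R) c (a (i.succAbove r))
    obtain ⟨b', hb'⟩ := exists_natIndicator_comp_succAbove (R := R) c (b (i.succAbove r))
    exact ⟨a', b', by rw [← ha', ← hb']; ext j; simp [hab]⟩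

/-- The determinant of any square Petrie matrix (a 0-1 matrix in which the ones
in each row occur consecutively) is `-1`, `0`, or `1`. -/
theorem stmt0 (n : ℕ) (M : Matrix (Fin n) (Fin n) ℤ)
    (hP : ∀ i : Fin n, ∃ a b : ℕ, a ≤ b ∧ b ≤ n ∧
      ∀ j : Fin n, M i j = if a ≤ (j : ℕ) ∧ (j : ℕ) < b then 1 else 0) :
    M.det = -1 ∨ M.det = 0 ∨ M.det = 1 := by
  have hrows (i : Fin n) : ∃ a b, (M * colDiff n : Matrix (Fin n) (Fin n) ℤ) i =
      natIndicator n a - natIndicator n b := by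
    obtain ⟨a, b, hab, hbn, hMi⟩ := hP i
    exact ⟨a, b, by rw [mul_apply_eq_vecMul, ← vecMul_colDiff hab hbn, ← funext hMi]⟩
  have hdet := det_mem_range_signType_cast_of_rows_natIndicator_sub _ hrows
  rw [det_mul, det_colDiff, mul_one, SignType.range_eq] at hdet
  simp only [Set.mem_insert_iff, Set.mem_singleton_iff] at hdet
  exact or_left_comm.mp hdet
end

section
/- Let λ and μ be partitions (padded with zeros to length n) and k ≥ 0. If μ is not contained in λ (i.e., λ_i < μ_i for some i), then the determinant of the k-Petrie matrix Pet_k(λ,μ) is 0. -/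
/-!
Since `λ` is weakly decreasing and `μ` too, the entry `λ_r - r - μ_c + c` at a row `r ≥ i` and a
column `c ≤ i` is at most `λ_i - μ_i < 0`, so `Pet_k(λ,μ)` has an `(n - i + 1) × i` block of zeros
(1-indexed). Such a block is too large for any permutation to avoid it, so every term of the
Leibniz expansion of the determinant vanishes.
-/

/-- Pigeonhole: `σ` cannot map all of `Iic i` into the strictly smaller `Iio i`. -/
theorem Equiv.Perm.exists_le_and_le_apply {ι : Type*} [LinearOrder ι] [LocallyFiniteOrderBot ι]
    (σ : Equiv.Perm ι) (i : ι) : ∃ c ≤ i, i ≤ σ c := by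
  by_contra! hσ
  have hmaps : Set.MapsTo σ (Finset.Iic i) (Finset.Iio i) := fun c hc => by
    simpa using hσ c (Finset.mem_Iic.mp hc)
  have hcard := Finset.card_le_card_of_injOn σ hmaps σ.injective.injOn
  rw [Finset.Iic_eq_cons_Iio, Finset.card_cons] at hcard
  omega

theorem Matrix.det_eq_zero_of_apply_eq_zero_of_le_of_le {ι R : Type*} [Fintype ι]
    [LinearOrder ι] [LocallyFiniteOrderBot ι] [CommRing R] (M : Matrix ι ι R) (i : ι)
    (hM : ∀ r c, i ≤ r → c ≤ i → M r c = 0) : M.det = 0 := by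
  rw [Matrix.det_apply]
  refine Finset.sum_eq_zero fun σ _ => ?_
  obtain ⟨c, hci, hσc⟩ := σ.exists_le_and_le_apply i
  rw [Finset.prod_eq_zero (f := fun j => M (σ j) j) (Finset.mem_univ c) (hM (σ c) c hσc hci),
    smul_zero]

/-- If `μ ⊄ λ` (i.e. `λ_i < μ_i` for some `i`), then `det (Pet_k(λ,μ)) = 0`.
Rows and columns are 1-indexed via `(i : ℕ) + 1` for `i : Fin n`. -/
theorem stmt4 (n k : ℕ) (lam mu : Fin n → ℕ)
    (hlam : ∀ i j : Fin n, i ≤ j → lam j ≤ lam i)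
    (hmu : ∀ i j : Fin n, i ≤ j → mu j ≤ mu i)
    (h : ∃ i : Fin n, lam i < mu i) :
    (Matrix.of fun i j : Fin n =>
      if (0 : ℤ) ≤ (lam i : ℤ) - ((i : ℕ) + 1) - (mu j : ℤ) + ((j : ℕ) + 1) ∧
         (lam i : ℤ) - ((i : ℕ) + 1) - (mu j : ℤ) + ((j : ℕ) + 1) < k
      then (1 : ℤ) else 0).det = 0 := by
  obtain ⟨i, hi⟩ := h
  refine Matrix.det_eq_zero_of_apply_eq_zero_of_le_of_le _ i fun r c hir hci => ?_
  have hlam_r : lam r ≤ lam i := hlam i r hir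
  have hmu_c : mu i ≤ mu c := hmu c i hci
  have hir' : (i : ℕ) ≤ r := hir
  have hci' : (c : ℕ) ≤ i := hci
  rw [Matrix.of_apply, if_neg]
  omega
end

section
/- Let λ and μ be partitions padded to length n and k ≥ 0. If λ_i ≥ μ_i + k for some i, then det(Pet_k(λ,μ)) = 0. -/
/-!
Every permutation `σ` of `Fin n` sends some `j ≥ i` to a row `σ j ≤ i`, since `n - i` columns
cannot be sent injectively into the `n - i - 1` rows above `i`. For the Petrie matrix the entries
in rows `≤ i` and columns `≥ i` all vanish: there the content `λ_a - a - μ_b + b` is at least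
`λ_i - μ_i ≥ k` because `λ` and `μ` are weakly decreasing. So every term of the Leibniz expansion
of the determinant is zero.
-/

open Finset

theorem Equiv.Perm.exists_le_and_apply_le {n : ℕ} (σ : Equiv.Perm (Fin n)) (i : Fin n) :
    ∃ j, i ≤ j ∧ σ j ≤ i := by
  by_contra! hc
  have hmaps : ∀ j ∈ Ici i, σ j ∈ Ioi i := fun j hj => mem_Ioi.2 (hc j (mem_Ici.1 hj))
  have hcard := card_le_card_of_injOn σ hmaps σ.injective.injOn
  rw [Fin.card_Ici, Fin.card_Ioi] at hcard
  omega

theorem Matrix.det_eq_zero_of_upper_right_zero {n : ℕ} {R : Type*} [CommRing R]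
    (M : Matrix (Fin n) (Fin n) R) (i : Fin n) (hM : ∀ a b, a ≤ i → i ≤ b → M a b = 0) :
    M.det = 0 := by
  rw [Matrix.det_apply]
  refine sum_eq_zero fun σ _ => ?_
  obtain ⟨j, hij, hσj⟩ := σ.exists_le_and_apply_le i
  have hprod : ∏ x, M (σ x) x = 0 := prod_eq_zero (mem_univ j) (hM (σ j) j hσj hij)
  rw [hprod, smul_zero]

def petrieMatrix {n : ℕ} (k : ℕ) (lam mu : Fin n → ℕ) : Matrix (Fin n) (Fin n) ℤ :=
  Matrix.of fun i j : Fin n =>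
    if (0 : ℤ) ≤ (lam i : ℤ) - ((i : ℕ) + 1) - (mu j : ℤ) + ((j : ℕ) + 1) ∧
       (lam i : ℤ) - ((i : ℕ) + 1) - (mu j : ℤ) + ((j : ℕ) + 1) < k
    then 1 else 0

theorem petrieMatrix_apply_eq_zero {n k : ℕ} {lam mu : Fin n → ℕ}
    (hlam : Antitone lam) (hmu : Antitone mu) {a b i : Fin n}
    (hai : a ≤ i) (hib : i ≤ b) (hi : mu i + k ≤ lam i) :
    petrieMatrix k lam mu a b = 0 := by
  have hlam' : (lam i : ℤ) ≤ lam a := by exact_mod_cast hlam hai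
  have hmu' : (mu b : ℤ) ≤ mu i := by exact_mod_cast hmu hib
  have hai' : ((a : ℕ) : ℤ) ≤ (i : ℕ) := by exact_mod_cast hai
  have hib' : ((i : ℕ) : ℤ) ≤ (b : ℕ) := by exact_mod_cast hib
  have hi' : (mu i : ℤ) + k ≤ lam i := by exact_mod_cast hi
  simp only [petrieMatrix, Matrix.of_apply]
  rw [if_neg]
  rintro ⟨-, hlt⟩
  linarith

theorem det_petrieMatrix_eq_zero {n k : ℕ} {lam mu : Fin n → ℕ}
    (hlam : Antitone lam) (hmu : Antitone mu) {i : Fin n} (hi : mu i + k ≤ lam i) :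
    (petrieMatrix k lam mu).det = 0 :=
  Matrix.det_eq_zero_of_upper_right_zero _ i fun _ _ hai hib =>
    petrieMatrix_apply_eq_zero hlam hmu hai hib hi

/-- If `λ_i ≥ μ_i + k` for some `i`, then `det (Pet_k(λ,μ)) = 0`.
Rows and columns are 1-indexed via `(i : ℕ) + 1` for `i : Fin n`. -/
theorem stmt5 (n k : ℕ) (lam mu : Fin n → ℕ)
    (hlam : ∀ i j : Fin n, i ≤ j → lam j ≤ lam i)
    (hmu : ∀ i j : Fin n, i ≤ j → mu j ≤ mu i)
    (h : ∃ i : Fin n, mu i + k ≤ lam i) :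
    (Matrix.of fun i j : Fin n =>
      if (0 : ℤ) ≤ (lam i : ℤ) - ((i : ℕ) + 1) - (mu j : ℤ) + ((j : ℕ) + 1) ∧
         (lam i : ℤ) - ((i : ℕ) + 1) - (mu j : ℤ) + ((j : ℕ) + 1) < k
      then (1 : ℤ) else 0).det = 0 := by
  obtain ⟨i, hi⟩ := h
  exact det_petrieMatrix_eq_zero (fun a b hab => hlam a b hab) (fun a b hab => hmu a b hab) hi
end

section
/- Let λ, μ be partitions of length at most n = p + q such that λ_{p+1} − (p+1) < μ_p − p (i.e., the skew shape λ/μ decomposes into two disconnected skew pieces after row p). Then det(Pet_k(λ,μ)) equals the product of the determinant of the upper-left p×p block and the determinant of the lower-right q×q block of Pet_k(λ,μ), where the upper-left block is Pet_k((λ_1,…,λ_p),(μ_1,…,μ_p)) and the lower-right block is Pet_k of the shifted tails. -/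
namespace Matrix

variable {R : Type*} [CommRing R] {p q : ℕ}

theorem det_eq_det_castAdd_mul_det_natAdd (M : Matrix (Fin (p + q)) (Fin (p + q)) R)
    (h : ∀ i j, M (Fin.natAdd p i) (Fin.castAdd q j) = 0) :
    M.det = (M.submatrix (Fin.castAdd q) (Fin.castAdd q)).det *
      (M.submatrix (Fin.natAdd p) (Fin.natAdd p)).det := by
  have hblocks : M.submatrix finSumFinEquiv finSumFinEquiv =
      fromBlocks (M.submatrix (Fin.castAdd q) (Fin.castAdd q))
        (M.submatrix (Fin.castAdd q) (Fin.natAdd p)) 0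
        (M.submatrix (Fin.natAdd p) (Fin.natAdd p)) := by
    ext (i | i) (j | j) <;> simp [h]
  rw [← det_submatrix_equiv_self finSumFinEquiv M, hblocks, det_fromBlocks_zero₂₁]

end Matrix

theorem antitone_sub_succ_val {n : ℕ} {f : Fin n → ℕ} (hf : Antitone f) :
    Antitone fun i : Fin n => (f i : ℤ) - ((i : ℕ) + 1) := by
  intro i j hij
  dsimp only
  have hfij := hf hij
  have hij' : (i : ℕ) ≤ j := hij
  omega

/-- If `λ_{p+1} − (p+1) < μ_p − p`, so that the skew shape splits after row `p`,
then `det (Pet_k(λ,μ))` is the product of the determinants of the upper-left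
`p × p` block and the lower-right `q × q` block.  Indices are 1-indexed via
`(i : ℕ) + 1` for `i : Fin (p + q)`. -/
theorem stmt6 (p q k : ℕ) (hq : 1 ≤ q)
    (lam mu : Fin (p + q) → ℕ)
    (hlam : ∀ i j : Fin (p + q), i ≤ j → lam j ≤ lam i)
    (hmu : ∀ i j : Fin (p + q), i ≤ j → mu j ≤ mu i)
    (hsep : (lam ⟨p, by omega⟩ : ℤ) - ((p : ℤ) + 1) <
            (mu ⟨p - 1, by omega⟩ : ℤ) - (p : ℤ)) :
    let M : Matrix (Fin (p + q)) (Fin (p + q)) ℤ := Matrix.of fun i j =>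
      if (0 : ℤ) ≤ (lam i : ℤ) - ((i : ℕ) + 1) - (mu j : ℤ) + ((j : ℕ) + 1) ∧
         (lam i : ℤ) - ((i : ℕ) + 1) - (mu j : ℤ) + ((j : ℕ) + 1) < k
      then (1 : ℤ) else 0
    M.det = (M.submatrix (Fin.castAdd q) (Fin.castAdd q)).det *
            (M.submatrix (Fin.natAdd p) (Fin.natAdd p)).det := by
  intro M
  refine M.det_eq_det_castAdd_mul_det_natAdd fun i j => if_neg fun hpos => ?_
  -- `λ_i − i` and `μ_j − j` decrease, so `hsep` makes every lower-left offset negative.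
  have hrow := antitone_sub_succ_val hlam (show (⟨p, by omega⟩ : Fin (p + q)) ≤ Fin.natAdd p i
    by simp [Fin.le_def])
  have hcol := antitone_sub_succ_val hmu (show Fin.castAdd q j ≤ ⟨p - 1, by omega⟩
    by simp [Fin.le_def]; omega)
  simp only [Fin.val_natAdd, Fin.val_castAdd] at hpos hrow hcol
  push_cast at hrow hcol
  omega
end

section
/- Let P be an n×n Petrie matrix and suppose σ is the unique good orientation of P. Then det(P) = (−1)^{|σ| + inv(τ_σ)}, where τ_σ is the permutation sending i to c_{i+1} determined by the tails c_1,…,c_n of the oriented rows. -/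
/-!
Write `P = D * U`, where `U` is the upper unitriangular all-ones matrix and row `i` of `D` is
`e_{a_i} - e_{b_i}`: the signed incidence matrix of the Petrie graph with the column of
vertex `n` deleted. So `det P = det D`. In the Leibniz expansion of `det D`, a permutation `π`
contributes only if `π i ∈ {a_i, b_i}` for every `i`, i.e. if `π` is the tail map of a good
orientation; by uniqueness only `τ_σ` survives, and its product of entries is `(-1)^|σ|`.
-/

open Finset Matrix Equiv

namespace Equiv.Perm

theorem sign_eq_signAux {n : ℕ} (f : Perm (Fin n)) : sign f = signAux f := by
  induction f using swap_induction_on with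
  | one => rw [map_one, signAux_one]
  | swap_mul g x y hxy ih => rw [signAux_mul, signAux_swap hxy, map_mul, sign_swap hxy, ih]

theorem sign_eq_neg_one_pow_card_inversions {n : ℕ} (f : Perm (Fin n)) :
    (sign f : ℤ) = (-1) ^ #{p : Fin n × Fin n | p.1 < p.2 ∧ f p.2 < f p.1} := by
  have hcard : #{x ∈ finPairsLT n | f x.1 ≤ f x.2} =
      #{p : Fin n × Fin n | p.1 < p.2 ∧ f p.2 < f p.1} := by
    refine card_nbij' (fun x => (x.2, x.1)) (fun p => ⟨p.2, p.1⟩) ?_ ?_ (fun _ _ => rfl)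
      (fun _ _ => rfl)
    · intro x hx
      simp only [coe_filter, mem_finPairsLT, Set.mem_ofPred_eq, mem_univ, true_and] at hx ⊢
      exact ⟨hx.1, hx.2.lt_of_ne fun h => hx.1.ne' (f.injective h)⟩
    · intro p hp
      simp only [coe_filter, mem_finPairsLT, Set.mem_ofPred_eq, mem_univ, true_and] at hp ⊢
      exact ⟨hp.1, hp.2.le⟩
  rw [sign_eq_signAux, signAux, prod_ite, prod_const, prod_const_one, mul_one, hcard]
  push_cast
  rfl

end Equiv.Perm

namespace Matrix

variable {R : Type*} [CommRing R] {ι : Type*} {n : ℕ}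

def upperOnes (n : ℕ) : Matrix (Fin n) (Fin n) R := of fun k j => if k ≤ j then 1 else 0

theorem det_upperOnes : (upperOnes n : Matrix (Fin n) (Fin n) R).det = 1 := by
  have : (upperOnes n : Matrix (Fin n) (Fin n) R).IsUpperTriangular := fun k j (hjk : j < k) =>
    if_neg hjk.not_ge
  rw [det_of_isUpperTriangular this]
  simp [upperOnes]

theorem sum_ite_val_eq_mul_upperOnes_apply (c : ℕ) (j : Fin n) :
    ∑ k : Fin n, (if (k : ℕ) = c then (1 : R) else 0) * upperOnes n k j =
      if c ≤ (j : ℕ) then 1 else 0 := by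
  simp only [upperOnes, of_apply, Fin.le_def, ite_mul, one_mul, zero_mul]
  rw [Fin.sum_univ_eq_sum_range
    (fun k => if k = c then if k ≤ (j : ℕ) then (1 : R) else 0 else 0), sum_ite_eq']
  by_cases hcj : c ≤ j
  · simp [hcj, hcj.trans_lt j.isLt]
  · simp [hcj]

end Matrix

namespace Petrie

variable {R : Type*} [CommRing R] {ι : Type*} {n : ℕ}

def matrix (n : ℕ) (a b : ι → ℕ) : Matrix ι (Fin n) R :=
  of fun i j => if a i ≤ (j : ℕ) ∧ (j : ℕ) < b i then 1 else 0

def incidence (n : ℕ) (a b : ι → ℕ) : Matrix ι (Fin n) R :=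
  of fun i k => (if (k : ℕ) = a i then 1 else 0) - (if (k : ℕ) = b i then 1 else 0)

theorem incidence_mul_upperOnes {a b : ι → ℕ} (hab : ∀ i, a i ≤ b i) :
    (incidence n a b : Matrix ι (Fin n) R) * (upperOnes n : Matrix (Fin n) (Fin n) R) =
      matrix n a b := by
  ext i j
  rw [mul_apply]
  simp only [incidence, matrix, of_apply, sub_mul, sum_sub_distrib,
    sum_ite_val_eq_mul_upperOnes_apply]
  have := hab i
  split_ifs <;> first | omega | simp

section Orientation

variable {a b : ι → ℕ} {σ : ι → Bool}

variable (a b) in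
def tail (σ : ι → Bool) (i : ι) : ℕ := if σ i then b i else a i

variable (a b) in
def IsGoodOrientation (n : ℕ) (σ : ι → Bool) : Prop :=
  Function.Injective (tail a b σ) ∧ ∀ i, tail a b σ i < n

theorem tail_update_not_of_eq {i : ι} [DecidableEq ι] (h : a i = b i) :
    tail a b (Function.update σ i !σ i) = tail a b σ := by
  funext j
  rcases eq_or_ne j i with rfl | hj
  · cases σ j <;> simp [tail, h]
  · simp [tail, hj]

theorem tail_decide_eq_self {c : ι → ℕ} (hc : ∀ i, c i = a i ∨ c i = b i) :
    tail a b (fun i => decide (c i = b i)) = c := by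
  funext i
  rcases hc i with h | h <;> by_cases hb : c i = b i <;> simp_all [tail]

theorem IsGoodOrientation.ne_of_unique (hσ : IsGoodOrientation a b n σ)
    (huniq : ∀ σ', IsGoodOrientation a b n σ' → σ' = σ) (i : ι) : a i ≠ b i := by
  classical
  intro h
  have hflip := congrFun (huniq (Function.update σ i !σ i)
    (by simpa only [IsGoodOrientation, tail_update_not_of_eq h])) i
  simp at hflip

theorem incidence_apply_of_eq_tail {i : ι} {k : Fin n} (hne : a i ≠ b i)
    (hk : (k : ℕ) = tail a b σ i) : (incidence n a b i k : R) = if σ i then -1 else 1 := by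
  cases hσi : σ i <;> simp only [tail, hσi] at hk <;> simp [incidence, hk, hne, hne.symm]

theorem eq_or_eq_of_incidence_apply_ne_zero {i : ι} {k : Fin n}
    (h : (incidence n a b i k : R) ≠ 0) : (k : ℕ) = a i ∨ (k : ℕ) = b i := by
  by_contra! hk
  simp [incidence, hk.1, hk.2] at h

end Orientation

section Determinant

variable {a b : Fin n → ℕ} {σ : Fin n → Bool}

noncomputable def IsGoodOrientation.perm (hσ : IsGoodOrientation a b n σ) : Perm (Fin n) :=
  Equiv.ofBijective (fun i => ⟨tail a b σ i, hσ.2 i⟩)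
    (Finite.injective_iff_bijective.mp fun _ _ h => hσ.1 (congrArg Fin.val h))

theorem IsGoodOrientation.val_perm_apply (hσ : IsGoodOrientation a b n σ) (i : Fin n) :
    (hσ.perm i : ℕ) = tail a b σ i :=
  rfl

theorem prod_incidence_perm (hσ : IsGoodOrientation a b n σ) (hne : ∀ i, a i ≠ b i) :
    ∏ i, (incidence n a b i (hσ.perm i) : R) = (-1) ^ #{i | σ i} := by
  rw [prod_congr rfl fun i _ => incidence_apply_of_eq_tail (hne i) (hσ.val_perm_apply i),
    prod_ite, prod_const, prod_const_one, mul_one]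

theorem eq_perm_of_prod_incidence_ne_zero (hσ : IsGoodOrientation a b n σ)
    (huniq : ∀ σ', IsGoodOrientation a b n σ' → σ' = σ) (π : Perm (Fin n))
    (h : ∏ i, (incidence n a b i (π i) : R) ≠ 0) : π = hσ.perm := by
  have htail : tail a b (fun i => decide ((π i : ℕ) = b i)) = fun i => (π i : ℕ) :=
    tail_decide_eq_self fun i =>
      eq_or_eq_of_incidence_apply_ne_zero fun hi => h (prod_eq_zero (mem_univ i) hi)
  have hgood : IsGoodOrientation a b n (fun i => decide ((π i : ℕ) = b i)) := by
    refine ⟨?_, fun i => ?_⟩ <;> rw [htail]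
    · exact fun i j hij => π.injective (Fin.ext hij)
    · exact (π i).isLt
  ext i
  rw [hσ.val_perm_apply, ← huniq _ hgood, htail]

theorem det_incidence (hσ : IsGoodOrientation a b n σ)
    (huniq : ∀ σ', IsGoodOrientation a b n σ' → σ' = σ) :
    (incidence n a b : Matrix (Fin n) (Fin n) R).det = Perm.sign hσ.perm * (-1) ^ #{i | σ i} := by
  rw [← det_transpose, det_apply', sum_eq_single hσ.perm]
  · simp only [transpose_apply, prod_incidence_perm hσ (hσ.ne_of_unique huniq)]
  · intro π _ hπ
    simp only [transpose_apply]
    rw [not_imp_comm.mp (eq_perm_of_prod_incidence_ne_zero hσ huniq π) hπ, mul_zero]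
  · exact fun h => absurd (mem_univ _) h

end Determinant

end Petrie

open Petrie

theorem stmt9_general (n : ℕ) (a b : Fin n → ℕ)
    (hab : ∀ i, a i ≤ b i)
    (P : Matrix (Fin n) (Fin n) ℤ)
    (hP : ∀ i j, P i j = if a i ≤ (j : ℕ) ∧ (j : ℕ) < b i then 1 else 0)
    (σ : Fin n → Bool)
    (hgood : Function.Injective (fun i => if σ i then b i else a i) ∧
      ∀ i, (if σ i then b i else a i) < n)
    (huniq : ∀ σ' : Fin n → Bool,
      (Function.Injective (fun i => if σ' i then b i else a i) ∧
        ∀ i, (if σ' i then b i else a i) < n) → σ' = σ) :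
    P.det = (-1 : ℤ) ^
      ((Finset.univ.filter fun i : Fin n =>
          (if σ i then a i else b i) < (if σ i then b i else a i)).card +
       (Finset.univ.filter fun pij : Fin n × Fin n => pij.1 < pij.2 ∧
          (if σ pij.2 then b pij.2 else a pij.2) <
          (if σ pij.1 then b pij.1 else a pij.1)).card) := by
  have hσ : IsGoodOrientation a b n σ := hgood
  have hne := hσ.ne_of_unique huniq
  have hPmatrix : P = matrix n a b := ext fun i j => hP i j
  rw [hPmatrix, ← incidence_mul_upperOnes hab, det_mul, det_upperOnes, mul_one,
    det_incidence hσ huniq, Int.cast_id, Perm.sign_eq_neg_one_pow_card_inversions, ← pow_add,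
    add_comm]
  congr 3
  ext i
  cases hσi : σ i <;> simp [hσi, (hab i).lt_of_ne (hne i), (hab i).not_gt]

/-- If an `n × n` Petrie matrix `P` (rows `v[a_i, b_i]`, ones in 0-indexed columns
`a_i ≤ j < b_i`) has a unique good orientation `σ` (tails `c_i ∈ {a_i,b_i}` forming a
permutation of `0,…,n−1`), then `det P = (−1)^{|σ| + inv(τ_σ)}` where
`|σ| = #{i : c_i > d_i}` and `inv(τ_σ) = #{(i,j) : i < j, c_i > c_j}`. -/
theorem stmt9 (n : ℕ) (a b : Fin n → ℕ)
    (hab : ∀ i, a i ≤ b i) (hb : ∀ i, b i ≤ n)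
    (P : Matrix (Fin n) (Fin n) ℤ)
    (hP : ∀ i j, P i j = if a i ≤ (j : ℕ) ∧ (j : ℕ) < b i then 1 else 0)
    (σ : Fin n → Bool)
    (hgood : Function.Injective (fun i => if σ i then b i else a i) ∧
      ∀ i, (if σ i then b i else a i) < n)
    (huniq : ∀ σ' : Fin n → Bool,
      (Function.Injective (fun i => if σ' i then b i else a i) ∧
        ∀ i, (if σ' i then b i else a i) < n) → σ' = σ) :
    P.det = (-1 : ℤ) ^
      ((Finset.univ.filter fun i : Fin n =>
          (if σ i then a i else b i) < (if σ i then b i else a i)).card +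
       (Finset.univ.filter fun pij : Fin n × Fin n => pij.1 < pij.2 ∧
          (if σ pij.2 then b pij.2 else a pij.2) <
          (if σ pij.1 then b pij.1 else a pij.1)).card) :=
  stmt9_general n a b hab P hP σ hgood huniq
end

section
/- Let ν and μ be partitions with μ ⊆ ν. Then ν/μ is a horizontal strip (at most one cell in each column, equivalently ν_1 ≥ μ_1 ≥ ν_2 ≥ μ_2 ≥ …) if and only if for each j ≥ 0 there is exactly one index i with −μ_j + j ≤ −ν_i + i − 1 ≤ −μ_{j+1} + j (with the convention μ_0 = ∞), and in that case i = j+1. -/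
/-!
Row `i` of `ν` has its down edge at position `i - 1 - ν_i`; as `ν` is weakly decreasing, these
positions strictly increase with `i`. Containment `μ_j ≤ ν_j` puts the edges of all rows `i ≤ j`
before the start `j - μ_j` of cluster `j`, and the strip inequality `ν_{j+2} ≤ μ_{j+1}` puts the
edges of all rows `i ≥ j + 2` after its end `j - μ_{j+1}`, so for a horizontal strip cluster `j`
holds exactly the edge of row `j + 1`. Conversely, if the strip inequality first fails as
`μ_{j+1} < ν_{j+2}`, then cluster `j` holds the edges of both rows `j + 1` and `j + 2`.
-/

namespace HorizontalStrip

variable {nu mu : ℕ → ℕ} {i j : ℕ}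

/-- The down edge `i - 1 - ν_i` of row `i` lies in cluster `j`, that is in
`[j - μ_j, j - μ_{j+1}]`, where cluster `0` is unbounded below (`μ_0 = ∞`). -/
def MemCluster (nu mu : ℕ → ℕ) (j i : ℕ) : Prop :=
  (1 ≤ j → (j : ℤ) - mu j ≤ (i : ℤ) - 1 - nu i) ∧ (i : ℤ) - 1 - nu i ≤ (j : ℤ) - mu (j + 1)

theorem memCluster_self_iff (hsub : ∀ i, 1 ≤ i → mu i ≤ nu i) :
    MemCluster nu mu j (j + 1) ↔ (1 ≤ j → nu (j + 1) ≤ mu j) := by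
  have := hsub (j + 1) j.succ_pos
  unfold MemCluster
  push_cast
  constructor
  · rintro ⟨hlow, -⟩ hj
    have := hlow hj
    omega
  · intro h
    exact ⟨fun hj => by have := h hj; omega, by omega⟩

theorem succ_le_of_memCluster (hnu : ∀ i, 1 ≤ i → nu (i + 1) ≤ nu i)
    (hsub : ∀ i, 1 ≤ i → mu i ≤ nu i) (hi : 1 ≤ i) (h : MemCluster nu mu j i) : j + 1 ≤ i := by
  by_contra! hij
  have hj : 1 ≤ j := by omega
  have hlow := h.1 hj
  have hmu := hsub j hj
  have hnu_ij : nu j ≤ nu i :=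
    antitoneOn_nat_Ici_of_succ_le hnu (Set.mem_Ici.2 hi) (Set.mem_Ici.2 hj) (by omega)
  omega

theorem le_succ_of_memCluster (hnu : ∀ i, 1 ≤ i → nu (i + 1) ≤ nu i)
    (hstrip : ∀ i, 1 ≤ i → nu (i + 1) ≤ mu i) (h : MemCluster nu mu j i) : i ≤ j + 1 := by
  by_contra! hij
  have hup := h.2
  have hstrip_j : nu (j + 2) ≤ mu (j + 1) := hstrip (j + 1) j.succ_pos
  have hnu_ij : nu i ≤ nu (j + 2) :=
    antitoneOn_nat_Ici_of_succ_le hnu (Set.mem_Ici.2 (by omega : 1 ≤ j + 2))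
      (Set.mem_Ici.2 (by omega : 1 ≤ i)) hij
  omega

theorem eq_succ_of_memCluster (hnu : ∀ i, 1 ≤ i → nu (i + 1) ≤ nu i)
    (hsub : ∀ i, 1 ≤ i → mu i ≤ nu i) (hstrip : ∀ i, 1 ≤ i → nu (i + 1) ≤ mu i) (hi : 1 ≤ i)
    (h : MemCluster nu mu j i) : i = j + 1 :=
  le_antisymm (le_succ_of_memCluster hnu hstrip h) (succ_le_of_memCluster hnu hsub hi h)

theorem existsUnique_memCluster_of_strip (hnu : ∀ i, 1 ≤ i → nu (i + 1) ≤ nu i)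
    (hsub : ∀ i, 1 ≤ i → mu i ≤ nu i) (hstrip : ∀ i, 1 ≤ i → nu (i + 1) ≤ mu i) (j : ℕ) :
    ∃! i, 1 ≤ i ∧ MemCluster nu mu j i :=
  ⟨j + 1, ⟨j.succ_pos, (memCluster_self_iff hsub).2 (hstrip j)⟩,
    fun _ ⟨hi, h⟩ => eq_succ_of_memCluster hnu hsub hstrip hi h⟩

theorem memCluster_add_two_of_lt (hnu : ∀ i, 1 ≤ i → nu (i + 1) ≤ nu i)
    (h : MemCluster nu mu j (j + 1)) (hlt : mu (j + 1) < nu (j + 2)) :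
    MemCluster nu mu j (j + 2) := by
  have : nu (j + 2) ≤ nu (j + 1) := hnu (j + 1) j.succ_pos
  refine ⟨fun hj => ?_, ?_⟩
  · have := h.1 hj
    push_cast at this ⊢
    omega
  · push_cast
    omega

theorem strip_of_existsUnique (hnu : ∀ i, 1 ≤ i → nu (i + 1) ≤ nu i)
    (hsub : ∀ i, 1 ≤ i → mu i ≤ nu i) (H : ∀ j, ∃! i, 1 ≤ i ∧ MemCluster nu mu j i) :
    ∀ i, 1 ≤ i → nu (i + 1) ≤ mu i := by
  suffices ∀ j, MemCluster nu mu j (j + 1) from fun i => (memCluster_self_iff hsub).1 (this i)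
  intro j
  induction j with
  | zero => exact (memCluster_self_iff hsub).2 (by omega)
  | succ k ih =>
    refine (memCluster_self_iff hsub).2 fun _ => ?_
    by_contra! hlt
    have hboth := (H k).unique ⟨k.succ_pos, ih⟩
      ⟨by omega, memCluster_add_two_of_lt hnu ih hlt⟩
    omega

end HorizontalStrip

open HorizontalStrip

theorem stmt12_general (nu mu : ℕ → ℕ)
    (hnu : ∀ i, 1 ≤ i → nu (i + 1) ≤ nu i)
    (hsub : ∀ i, 1 ≤ i → mu i ≤ nu i) :
    let Cond : ℕ → ℕ → Prop := fun j i =>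
      (1 ≤ j → (j : ℤ) - mu j ≤ (i : ℤ) - 1 - nu i) ∧
      (i : ℤ) - 1 - nu i ≤ (j : ℤ) - mu (j + 1)
    ((∀ i, 1 ≤ i → nu (i + 1) ≤ mu i) ↔
      ∀ j : ℕ, ∃! i : ℕ, 1 ≤ i ∧ Cond j i) ∧
    ((∀ i, 1 ≤ i → nu (i + 1) ≤ mu i) →
      ∀ j i : ℕ, 1 ≤ i → Cond j i → i = j + 1) := by
  intro Cond
  exact ⟨⟨existsUnique_memCluster_of_strip hnu hsub, strip_of_existsUnique hnu hsub⟩,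
    fun hstrip _ _ => eq_succ_of_memCluster hnu hsub hstrip⟩

/-- For partitions `μ ⊆ ν` (1-indexed weakly decreasing functions `ℕ → ℕ`), the skew
shape `ν/μ` is a horizontal strip (`ν_{i+1} ≤ μ_i` for all `i ≥ 1`) iff for every
`j ≥ 0` there is exactly one index `i ≥ 1` with
`−μ_j + j ≤ −ν_i + i − 1 ≤ −μ_{j+1} + j` (the lower bound being vacuous for `j = 0`,
by the convention `μ_0 = ∞`); and in that case that index is `i = j + 1`. -/
theorem stmt12 (nu mu : ℕ → ℕ)
    (hnu : ∀ i, 1 ≤ i → nu (i + 1) ≤ nu i)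
    (hmu : ∀ i, 1 ≤ i → mu (i + 1) ≤ mu i)
    (hsub : ∀ i, 1 ≤ i → mu i ≤ nu i) :
    let Cond : ℕ → ℕ → Prop := fun j i =>
      (1 ≤ j → (j : ℤ) - mu j ≤ (i : ℤ) - 1 - nu i) ∧
      (i : ℤ) - 1 - nu i ≤ (j : ℤ) - mu (j + 1)
    ((∀ i, 1 ≤ i → nu (i + 1) ≤ mu i) ↔
      ∀ j : ℕ, ∃! i : ℕ, 1 ≤ i ∧ Cond j i) ∧
    ((∀ i, 1 ≤ i → nu (i + 1) ≤ mu i) →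
      ∀ j i : ℕ, 1 ≤ i → Cond j i → i = j + 1) :=
  stmt12_general nu mu hnu hsub
end

section
/- Let π be a Motzkin path of length m satisfying the red-blue rule: marking each step blue if the number of horizontal steps up to and including it is even and red otherwise, at every prefix the number of red down-steps is at most the number of blue up-steps, and the number of blue down-steps is at most the number of red up-steps. Then among the lattice points (x,y) with y ≥ 0 lying strictly below the path, the number of points with x+y even equals the number of points with x+y odd. -/
/-!
Write `h x` for the height of the path over `x`. Column `x` contributes
`g x = (-1)^x * (h x % 2)` (`columnWeight`) to (#even points − #odd points), and since
`g 0 = g m = 0`, `2 * ∑ g = ∑_{i<m} (g i + g (i+1))`.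
A flat step keeps the height, so `g i + g (i+1) = 0`. An up or down step flips the parity of the
height, and because `i + h i + #(flat steps before i)` is always even, `g i + g (i+1)` is `-1` for
a blue step and `+1` for a red one. Hence `2 * ∑ g = (UR - DB) - (UB - DR)`, where `UR` counts
the red up steps and so on. The path ends at height `0`, so `(UR - DB) + (UB - DR) = 0`, and by
the red-blue rule both terms are nonnegative; so both vanish.
-/

/-- A step of a Motzkin path is blue if the number of horizontal steps up to and
including it is even, red otherwise. -/
def isBlue (s : ℕ → ℤ) (i : ℕ) : Bool :=
  ((Finset.range (i + 1)).filter fun l => s l = 0).card % 2 == 0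

open Finset

theorem Finset.sum_range_succ_add_sum_range_succ {M : Type*} [AddCommMonoid M] (f : ℕ → M)
    (t : ℕ) :
    ∑ x ∈ range (t + 1), f x + ∑ x ∈ range (t + 1), f x =
      f 0 + f t + ∑ i ∈ range t, (f i + f (i + 1)) := by
  nth_rewrite 1 [sum_range_succ']
  rw [sum_range_succ, sum_add_distrib]
  abel

theorem sum_range_neg_one_pow_add (x n : ℕ) :
    ∑ y ∈ range n, (-1 : ℤ) ^ (x + y) = (-1) ^ x * ((n : ℤ) % 2) := by
  simp only [pow_add, ← mul_sum]
  congr 1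
  induction n with
  | zero => simp
  | succ n ih =>
    rw [sum_range_succ, ih]
    simp only [neg_one_pow_eq_ite, Nat.even_iff]
    split_ifs <;> omega

theorem Finset.card_filter_even_sub_card_filter_odd {α : Type*} (T : Finset α) (p : α → Prop)
    [DecidablePred p] (f : α → ℕ) :
    (#{a ∈ T | p a ∧ f a % 2 = 0} : ℤ) - #{a ∈ T | p a ∧ f a % 2 = 1} =
      ∑ a ∈ T with p a, (-1 : ℤ) ^ f a := by
  rw [natCast_card_filter, natCast_card_filter, sum_filter, ← sum_sub_distrib]
  refine sum_congr rfl fun a _ => ?_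
  rcases Nat.mod_two_eq_zero_or_one (f a) with h | h <;>
    simp [neg_one_pow_eq_ite, Nat.even_iff, h, apply_ite]

namespace MotzkinPath

variable (s : ℕ → ℤ)

def height (t : ℕ) : ℤ := ∑ i ∈ range t, s i

def numFlat (t : ℕ) : ℕ := #{i ∈ range t | s i = 0}

def numSteps (t : ℕ) (d : ℤ) (b : Bool) : ℕ := #{i ∈ range t | s i = d ∧ isBlue s i = b}

def columnWeight (x : ℕ) : ℤ := (-1) ^ x * (height s x % 2)

def stepSign (i : ℕ) : ℤ := if s i = 0 then 0 else if isBlue s i then -1 else 1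

theorem height_succ (t : ℕ) : height s (t + 1) = height s t + s t := sum_range_succ _ _

theorem numFlat_succ (t : ℕ) : numFlat s (t + 1) = numFlat s t + if s t = 0 then 1 else 0 := by
  rw [numFlat, numFlat, range_add_one, filter_insert]
  split_ifs <;> simp [card_insert_of_notMem]

theorem isBlue_iff (i : ℕ) : isBlue s i = true ↔ numFlat s (i + 1) % 2 = 0 := by
  simp [isBlue, numFlat]

variable {s} {t : ℕ}

theorem height_le (hstep : ∀ i < t, s i = 1 ∨ s i = 0 ∨ s i = -1) : height s t ≤ t := calc
  height s t ≤ ∑ i ∈ range t, (1 : ℤ) := sum_le_sum fun i hi => by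
    rcases hstep i (mem_range.mp hi) with h | h | h <;> omega
  _ = t := by simp

theorem height_add_numFlat_emod_two (hstep : ∀ i < t, s i = 1 ∨ s i = 0 ∨ s i = -1) :
    (height s t + t + numFlat s t) % 2 = 0 := by
  induction t with
  | zero => simp [height, numFlat]
  | succ t ih =>
    have ih := ih fun i hi => hstep i (by omega)
    rw [height_succ, numFlat_succ]
    rcases hstep t (by omega) with h | h | h <;> simp only [h] <;> push_cast <;> simp <;> omega

theorem height_eq_numSteps (hstep : ∀ i < t, s i = 1 ∨ s i = 0 ∨ s i = -1) :
    height s t = (numSteps s t 1 true : ℤ) + numSteps s t 1 false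
      - numSteps s t (-1) true - numSteps s t (-1) false := by
  simp only [height, numSteps, natCast_card_filter, ← sum_add_distrib, ← sum_sub_distrib]
  refine sum_congr rfl fun i hi => ?_
  rcases hstep i (mem_range.mp hi) with h | h | h <;> cases hb : isBlue s i <;> simp [h]

theorem sum_stepSign (hstep : ∀ i < t, s i = 1 ∨ s i = 0 ∨ s i = -1) :
    ∑ i ∈ range t, stepSign s i = (numSteps s t 1 false : ℤ) + numSteps s t (-1) false
      - numSteps s t 1 true - numSteps s t (-1) true := by
  simp only [numSteps, natCast_card_filter, ← sum_add_distrib, ← sum_sub_distrib]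
  refine sum_congr rfl fun i hi => ?_
  rcases hstep i (mem_range.mp hi) with h | h | h <;> cases hb : isBlue s i <;>
    simp [stepSign, h, hb]

theorem columnWeight_add_columnWeight_succ {i : ℕ}
    (hstep : ∀ j < i + 1, s j = 1 ∨ s j = 0 ∨ s j = -1) :
    columnWeight s i + columnWeight s (i + 1) = stepSign s i := by
  have hpar := height_add_numFlat_emod_two fun j hj => hstep j (Nat.lt_succ_of_lt hj)
  have hblue := isBlue_iff s i
  rw [numFlat_succ] at hblue
  rw [columnWeight, columnWeight, stepSign, height_succ, pow_succ]
  simp only [neg_one_pow_eq_ite, Nat.even_iff]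
  rcases hstep i (Nat.lt_succ_self i) with h | h | h <;> cases hb : isBlue s i <;>
    simp only [h, hb] at hblue ⊢ <;> simp at hblue ⊢ <;> split_ifs <;> omega

theorem sum_columnWeight_eq_zero {m : ℕ} (hstep : ∀ i < m, s i = 1 ∨ s i = 0 ∨ s i = -1)
    (hend : height s m = 0) (hrb1 : numSteps s m (-1) false ≤ numSteps s m 1 true)
    (hrb2 : numSteps s m (-1) true ≤ numSteps s m 1 false) :
    ∑ x ∈ range (m + 1), columnWeight s x = 0 := by
  have htel := sum_range_succ_add_sum_range_succ (columnWeight s) m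
  rw [sum_congr rfl fun i hi => columnWeight_add_columnWeight_succ fun j hj =>
    hstep j (by rw [mem_range] at hi; omega), sum_stepSign hstep] at htel
  have h0 : columnWeight s 0 = 0 := by simp [columnWeight, height]
  have hm : columnWeight s m = 0 := by simp [columnWeight, hend]
  have hbal := height_eq_numSteps hstep
  omega

theorem sum_neg_one_pow_below_path {m : ℕ} (hstep : ∀ i < m, s i = 1 ∨ s i = 0 ∨ s i = -1)
    (hnonneg : ∀ t ≤ m, 0 ≤ height s t) :
    ∑ p ∈ range (m + 1) ×ˢ range (m + 1) with (p.2 : ℤ) < height s p.1,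
        (-1 : ℤ) ^ (p.1 + p.2) =
      ∑ x ∈ range (m + 1), columnWeight s x := by
  rw [sum_filter, sum_product]
  refine sum_congr rfl fun x hx => ?_
  have hxm : x ≤ m := Nat.lt_succ_iff.mp (mem_range.mp hx)
  have hle := height_le fun i hi => hstep i (hi.trans_le hxm)
  have hcolumn :
      {y ∈ range (m + 1) | ((y : ℕ) : ℤ) < height s x} = range (height s x).toNat := by
    ext y
    simp only [mem_filter, mem_range, Int.lt_toNat]
    omega
  rw [← sum_filter, hcolumn, sum_range_neg_one_pow_add, Int.toNat_of_nonneg (hnonneg x hxm),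
    columnWeight]

end MotzkinPath

/-- Let `π` be a Motzkin path of length `m` (steps `s i ∈ {1, 0, −1}`, partial sums
nonnegative, total sum `0`) satisfying the red-blue rule: in every prefix the number
of red down-steps is at most the number of blue up-steps and the number of blue
down-steps is at most the number of red up-steps.  Then among lattice points
`(x, y)`, `0 ≤ x ≤ m`, `0 ≤ y` strictly below the path (`y <` height over `x`), the
number with `x + y` even equals the number with `x + y` odd. -/
theorem stmt16 (m : ℕ) (s : ℕ → ℤ)
    (hstep : ∀ i < m, s i = 1 ∨ s i = 0 ∨ s i = -1)
    (hnonneg : ∀ t ≤ m, 0 ≤ ∑ i ∈ Finset.range t, s i)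
    (hend : ∑ i ∈ Finset.range m, s i = 0)
    (hrb1 : ∀ t ≤ m,
      ((Finset.range t).filter fun i => s i = -1 ∧ isBlue s i = false).card ≤
      ((Finset.range t).filter fun i => s i = 1 ∧ isBlue s i = true).card)
    (hrb2 : ∀ t ≤ m,
      ((Finset.range t).filter fun i => s i = -1 ∧ isBlue s i = true).card ≤
      ((Finset.range t).filter fun i => s i = 1 ∧ isBlue s i = false).card) :
    ((Finset.range (m + 1) ×ˢ Finset.range (m + 1)).filter fun p =>
        (p.2 : ℤ) < ∑ i ∈ Finset.range p.1, s i ∧ (p.1 + p.2) % 2 = 0).card =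
    ((Finset.range (m + 1) ×ˢ Finset.range (m + 1)).filter fun p =>
        (p.2 : ℤ) < ∑ i ∈ Finset.range p.1, s i ∧ (p.1 + p.2) % 2 = 1).card := by
  have hdiff := card_filter_even_sub_card_filter_odd (range (m + 1) ×ˢ range (m + 1))
    (fun p => (p.2 : ℤ) < MotzkinPath.height s p.1) (fun p => p.1 + p.2)
  rw [MotzkinPath.sum_neg_one_pow_below_path hstep hnonneg,
    MotzkinPath.sum_columnWeight_eq_zero hstep hend (hrb1 m le_rfl) (hrb2 m le_rfl)] at hdiff
  exact_mod_cast sub_eq_zero.mp hdiff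
end

section
/- Let τ be a permutation of {0,1,…,n−1} that is increasing on its set of excedance indices and increasing on its set of non-excedance indices (i.e., if i < j are both excedances then τ(i) < τ(j), and likewise for non-excedances). Then inv(τ) = Σ_{i : τ(i) > i} (τ(i) − i). -/
/-!
Write `inv τ = ∑ i, c i` with `c i = #{j > i | τ j < τ i}`. Since `τ` is increasing on the
non-excedances, a non-excedance `i` has `c i = 0`: a `j > i` with `τ j < τ i ≤ i < j` would be
a non-excedance that `τ` puts below `i`. At an excedance `i`, every `j < i` has `τ j < τ i`
(use monotonicity if `j` is an excedance, else `τ j ≤ j < i < τ i`), so the `τ i` indices `j`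
with `τ j < τ i` are the `i` indices below `i` together with the `c i` ones above it.
-/

open Finset

section Inversions

variable {ι α : Type*} [LinearOrder ι] [LinearOrder α]

def rightInversionCount [Fintype ι] (f : ι → α) (i : ι) : ℕ := #{j | i < j ∧ f j < f i}

theorem card_inversions_eq_sum_rightInversionCount [Fintype ι] (f : ι → α) :
    #{p : ι × ι | p.1 < p.2 ∧ f p.2 < f p.1} = ∑ i, rightInversionCount f i := by
  simp only [rightInversionCount, card_filter, Fintype.sum_prod_type]

theorem rightInversionCount_eq_zero [Fintype ι] {f : ι → ι}
    (hf : StrictMonoOn f {i | f i ≤ i}) {i : ι} (hi : f i ≤ i) :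
    rightInversionCount f i = 0 := by
  refine card_eq_zero.2 (filter_eq_empty_iff.2 fun j _ ⟨hij, hji⟩ => ?_)
  have hj : f j ≤ j := (hji.trans_le hi).le.trans hij.le
  exact (hf hi hj hij).not_gt hji

theorem apply_lt_apply_of_lt_of_lt_apply {f : ι → ι} (hf : StrictMonoOn f {i | i < f i})
    {i j : ι} (hi : i < f i) (hji : j < i) : f j < f i := by
  rcases lt_or_ge j (f j) with hj | hj
  · exact hf hj hi hji
  · exact hj.trans_lt (hji.trans hi)

end Inversions

theorem card_filter_apply_lt_eq_add_rightInversionCount {α : Type*} [LinearOrder α] {n : ℕ}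
    {f : Fin n → α} {i : Fin n} (h : ∀ j < i, f j < f i) :
    #{j | f j < f i} = i + rightInversionCount f i := by
  have hsplit : univ.filter (fun j => f j < f i) =
      univ.filter (· < i) ∪ univ.filter fun j => i < j ∧ f j < f i := by
    ext j
    rcases lt_trichotomy j i with hji | rfl | hij
    · simp [hji, h j hji, hji.not_gt]
    · simp
    · simp [hij, hij.not_gt]
  rw [hsplit, card_union_of_disjoint, ← Fin.card_Iio i, filter_gt_eq_Iio, rightInversionCount]
  exact disjoint_filter.2 fun j _ hji hij => lt_asymm hji hij.1

theorem Equiv.Perm.card_filter_apply_lt {n : ℕ} (σ : Equiv.Perm (Fin n)) (k : Fin n) :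
    #{j | σ j < k} = k := by
  rw [card_filter, Equiv.sum_comp σ fun j => if j < k then 1 else 0, ← card_filter,
    filter_gt_eq_Iio, Fin.card_Iio]

theorem Equiv.Perm.rightInversionCount_eq_sub {n : ℕ} {τ : Equiv.Perm (Fin n)}
    (hτ : StrictMonoOn τ {i | i < τ i}) {i : Fin n} (hi : i < τ i) :
    rightInversionCount τ i = τ i - i := by
  have hcount := card_filter_apply_lt_eq_add_rightInversionCount (f := τ) (i := i)
    fun j hji => apply_lt_apply_of_lt_of_lt_apply hτ hi hji
  rw [τ.card_filter_apply_lt] at hcount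
  omega

/-- If a permutation `τ` of `{0,…,n−1}` is increasing on its excedance indices and
increasing on its non-excedance indices, then
`inv(τ) = Σ_{i : τ(i) > i} (τ(i) − i)`. -/
theorem stmt17 (n : ℕ) (τ : Equiv.Perm (Fin n))
    (hexc : ∀ i j : Fin n, i < j → i < τ i → j < τ j → τ i < τ j)
    (hnexc : ∀ i j : Fin n, i < j → τ i ≤ i → τ j ≤ j → τ i < τ j) :
    (Finset.univ.filter fun p : Fin n × Fin n => p.1 < p.2 ∧ τ p.2 < τ p.1).card =
    ∑ i ∈ Finset.univ.filter (fun i : Fin n => i < τ i), ((τ i : ℕ) - (i : ℕ)) := by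
  have hmonoExc : StrictMonoOn τ {i | i < τ i} := fun i hi j hj hij => hexc i j hij hi hj
  have hmonoNonexc : StrictMonoOn τ {i | τ i ≤ i} := fun i hi j hj hij => hnexc i j hij hi hj
  rw [card_inversions_eq_sum_rightInversionCount, sum_filter]
  refine sum_congr rfl fun i _ => ?_
  split_ifs with hi
  · exact τ.rightInversionCount_eq_sub hmonoExc hi
  · exact rightInversionCount_eq_zero hmonoNonexc (not_lt.1 hi)
end
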